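/- arXiv:1806.10314 — 4 statements merged into one kernel-verified Lean document; each statement's English description precedes it below -/
import Mathlib

section
/- For every smooth gauge parameter λ: ℝ³ → ℝ and every smooth vector field A: ℝ³ → ℝ³, the deformed products satisfy the two-input homotopy relation of the deformed abelian Chern–Simons L∞ algebra on the pair (λ, A): for each index a, Σ_{b,c} ε_{abc} ∂_b( −(v·A)∂_cλ − (v·∇λ)A_c ) + Σ_{i,b,c} v_i ε_{abc}( ∂_cλ ∂_bA_i + ∂_b∂_iλ A_c ) + (v·∇λ)(curl A)_a = 0; equivalently curl(b̃₂(A,λ)) + b̃₂(∇λ, A) + b̃₂(curl A, λ) = 0, where in the middle term the two-field product b̃₂(·,·) is evaluated on the vector fields ∇λ and A, and in the last term curl A is inserted in the degree −1 slot. -/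
/-! Expanding the curl of `b̃₂(A,λ)` by the Leibniz rule, every term cancels against one of
`b̃₂(∇λ,A)` or `b̃₂(curl A,λ)` except `-(v·A) Σ_{b,c} ε_{abc} ∂_b∂_cλ`, which vanishes because the
Hessian of `λ` is symmetric while `ε_{abc}` is antisymmetric in `b, c`. -/

noncomputable section

/-- Points of ℝ³ / vectors in ℝ³. -/
abbrev V3 := Fin 3 → ℝ

/-- Partial derivative ∂_i f at x. -/
def pd (f : V3 → ℝ) (i : Fin 3) (x : V3) : ℝ :=
  fderiv ℝ f x (Pi.single i 1)

/-- Levi-Civita symbol ε_{abc} on Fin 3. -/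
def eps (a b c : Fin 3) : ℝ :=
  (((b : ℕ) : ℝ) - ((a : ℕ) : ℝ)) * (((c : ℕ) : ℝ) - ((b : ℕ) : ℝ)) *
    (((c : ℕ) : ℝ) - ((a : ℕ) : ℝ)) / 2

/-- (curl A)_a = Σ_{b,c} ε_{abc} ∂_b A_c. -/
def curl (A : V3 → V3) (a : Fin 3) (x : V3) : ℝ :=
  ∑ b, ∑ c, eps a b c * pd (fun y => A y c) b x

open Finset

lemma eps_swap (a b c : Fin 3) : eps a c b = -eps a b c := by
  simp only [eps]
  ring

lemma sum_eps_mul_eq_zero_of_symm (a : Fin 3) {M : Fin 3 → Fin 3 → ℝ}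
    (hM : ∀ b c, M b c = M c b) : ∑ b, ∑ c, eps a b c * M b c = 0 := by
  have h : ∑ b, ∑ c, eps a b c * M b c = -∑ b, ∑ c, eps a b c * M b c :=
    calc ∑ b, ∑ c, eps a b c * M b c = ∑ b, ∑ c, eps a c b * M c b := sum_comm
      _ = ∑ b, ∑ c, -(eps a b c * M b c) :=
        sum_congr rfl fun b _ => sum_congr rfl fun c _ => by rw [eps_swap, hM, neg_mul]
      _ = -∑ b, ∑ c, eps a b c * M b c := by simp only [sum_neg_distrib]
  linarith

section PartialDerivatives

variable {f g : V3 → ℝ} {x : V3}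

lemma pd_neg (i : Fin 3) : pd (fun y => -f y) i x = -pd f i x := by
  simp [pd]

lemma pd_sub (hf : DifferentiableAt ℝ f x) (hg : DifferentiableAt ℝ g x) (i : Fin 3) :
    pd (fun y => f y - g y) i x = pd f i x - pd g i x := by
  simp [pd, fderiv_fun_sub hf hg]

lemma pd_mul (hf : DifferentiableAt ℝ f x) (hg : DifferentiableAt ℝ g x) (i : Fin 3) :
    pd (fun y => f y * g y) i x = pd f i x * g x + f x * pd g i x := by
  simp [pd, fderiv_fun_mul hf hg]
  ring

lemma pd_linear_combination {F : Fin 3 → V3 → ℝ} (hF : ∀ j, DifferentiableAt ℝ (F j) x)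
    (w : V3) (i : Fin 3) :
    pd (fun y => ∑ j, w j * F j y) i x = ∑ j, w j * pd (F j) i x := by
  simp [pd, fderiv_fun_sum fun j _ => (hF j).const_mul (w j), fderiv_const_mul (hF _)]

lemma pd_neg_mul_sub_mul {k l : V3 → ℝ} (hf : DifferentiableAt ℝ f x)
    (hg : DifferentiableAt ℝ g x) (hk : DifferentiableAt ℝ k x) (hl : DifferentiableAt ℝ l x)
    (i : Fin 3) :
    pd (fun y => -f y * g y - k y * l y) i x
      = -(pd f i x * g x + f x * pd g i x) - (pd k i x * l x + k x * pd l i x) := by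
  rw [pd_sub (hf.fun_neg.fun_mul hg) (hk.fun_mul hl), pd_mul hf.fun_neg hg, pd_mul hk hl, pd_neg]
  ring

lemma differentiable_pd (hf : ContDiff ℝ 2 f) (i : Fin 3) :
    Differentiable ℝ (fun y => pd f i y) :=
  ((hf.fderiv_right (m := 1) (by norm_num)).differentiable one_ne_zero).clm_apply
    (differentiable_const _)

lemma pd_pd_eq_fderiv_fderiv (hf : DifferentiableAt ℝ (fderiv ℝ f) x) (i j : Fin 3) :
    pd (fun y => pd f j y) i x = fderiv ℝ (fderiv ℝ f) x (Pi.single i 1) (Pi.single j 1) := by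
  simp [pd, fderiv_clm_apply hf (differentiableAt_const _)]

lemma pd_pd_comm (hf : ContDiffAt ℝ 2 f x) (i j : Fin 3) :
    pd (fun y => pd f j y) i x = pd (fun y => pd f i y) j x := by
  have hdf : DifferentiableAt ℝ (fderiv ℝ f) x :=
    (hf.fderiv_right (m := 1) (by norm_num)).differentiableAt one_ne_zero
  rw [pd_pd_eq_fderiv_fderiv hdf, pd_pd_eq_fderiv_fderiv hdf]
  exact hf.isSymmSndFDerivAt (by simp) _ _

end PartialDerivatives

theorem deformed_CS_two_input_homotopy
    (v : V3) (lam : V3 → ℝ) (A : V3 → V3)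
    (hlam : ContDiff ℝ (⊤ : ℕ∞) lam) (hA : ContDiff ℝ (⊤ : ℕ∞) A) :
    ∀ (a : Fin 3) (x : V3),
      -- curl(b̃₂(A,λ))_a
      (∑ b, ∑ c, eps a b c *
        pd (fun y => -(∑ i, v i * A y i) * pd lam c y
            - (∑ i, v i * pd lam i y) * A y c) b x)
      -- b̃₂(∇λ, A)_a
      + (∑ i, ∑ b, ∑ c, v i * eps a b c *
          (pd lam c x * pd (fun y => A y i) b x
            + pd (fun y => pd lam i y) b x * A x c))
      -- b̃₂(curl A, λ)_a
      + (∑ i, v i * pd lam i x) * curl A a x = 0 := by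
  intro a x
  have hAd : Differentiable ℝ A := hA.differentiable (by decide)
  have hAi : ∀ i, Differentiable ℝ (fun y => A y i) := fun i => by fun_prop
  have hpd : ∀ i, Differentiable ℝ (fun y => pd lam i y) :=
    differentiable_pd (hlam.of_le (by decide))
  have hG : Differentiable ℝ (fun y => ∑ i, v i * A y i) := by fun_prop
  have hK : Differentiable ℝ (fun y => ∑ i, v i * pd lam i y) := by fun_prop
  have hhess : ∀ b c, pd (fun y => pd lam c y) b x = pd (fun y => pd lam b y) c x :=
    fun b c => pd_pd_comm (hlam.contDiffAt.of_le (by decide)) b c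
  calc _ = -(∑ i, v i * A x i) * ∑ b, ∑ c, eps a b c * pd (fun y => pd lam c y) b x := by
        simp only [pd_neg_mul_sub_mul (hG x) (hpd _ x) (hK x) (hAi _ x),
          pd_linear_combination fun i => hAi i x, pd_linear_combination fun i => hpd i x]
        simp only [curl, Fin.sum_univ_three]
        ring
    _ = 0 := by rw [sum_eps_mul_eq_zero_of_symm a hhess, mul_zero]
end
end

section
/- For all smooth gauge parameters λ₁, λ₂: ℝ³ → ℝ and every smooth vector field A: ℝ³ → ℝ³, the three-input homotopy (Jacobi up to homotopy) relation of the deformed abelian Chern–Simons L∞ algebra holds on (λ₁, λ₂, A): −(v·A)(v·∇λ₁)∇λ₂ + (v·A)(v·∇λ₂)∇λ₁ + b̃₂( b̃₂(A,λ₁), λ₂ ) − b̃₂( b̃₂(A,λ₂), λ₁ ) = 0, where the first two terms are b̃₃(∇λ₁, A, λ₂) − b̃₃(∇λ₂, A, λ₁) and in the nested terms the inner b̃₂(A,λ) is a vector field inserted into the first slot of the outer b̃₂(·, λ). -/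
/- STATEMENT 1: three-input homotopy (Jacobi up to homotopy) relation of the
deformed abelian Chern–Simons L∞ algebra on (λ₁, λ₂, A). -/

noncomputable section

/-- b̃₂(A,λ) = −(v·A)∇λ − (v·∇λ)A. -/
def b2 (v : V3) (A : V3 → V3) (lam : V3 → ℝ) : V3 → V3 :=
  fun x a => -(∑ i, v i * A x i) * pd lam a x - (∑ i, v i * pd lam i x) * A x a

lemma contract (v : V3) (A : V3 → V3) (lam : V3 → ℝ) (x : V3) :
    ∑ i, v i * ((-∑ j, v j * A x j) * pd lam i x - (∑ j, v j * pd lam j x) * A x i) =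
      -((∑ j, v j * A x j) * (∑ i, v i * pd lam i x))
      - (∑ j, v j * pd lam j x) * (∑ i, v i * A x i) := by
  simp only [mul_sub, Finset.sum_sub_distrib]
  rw [show (∑ i, v i * ((-∑ j, v j * A x j) * pd lam i x))
      = -((∑ j, v j * A x j) * ∑ i, v i * pd lam i x) by
    rw [neg_mul_eq_neg_mul, Finset.mul_sum]
    exact Finset.sum_congr rfl fun i _ => by ring]
  rw [show (∑ i, v i * ((∑ j, v j * pd lam j x) * A x i))
      = (∑ j, v j * pd lam j x) * ∑ i, v i * A x i by
    rw [Finset.mul_sum]; exact Finset.sum_congr rfl fun i _ => by ring]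

theorem deformed_CS_three_input_homotopy
    (v : V3) (lam₁ lam₂ : V3 → ℝ) (A : V3 → V3)
    (h1 : ContDiff ℝ (⊤ : ℕ∞) lam₁) (h2 : ContDiff ℝ (⊤ : ℕ∞) lam₂)
    (hA : ContDiff ℝ (⊤ : ℕ∞) A) :
    ∀ (a : Fin 3) (x : V3),
      -- b̃₃(∇λ₁, A, λ₂)_a = −(v·∇λ₁)(v·A)∂_aλ₂
      (-(∑ i, v i * A x i) * (∑ i, v i * pd lam₁ i x) * pd lam₂ a x)
      -- −b̃₃(∇λ₂, A, λ₁)_a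
      + ((∑ i, v i * A x i) * (∑ i, v i * pd lam₂ i x) * pd lam₁ a x)
      -- b̃₂(b̃₂(A,λ₁), λ₂)_a
      + b2 v (b2 v A lam₁) lam₂ x a
      -- −b̃₂(b̃₂(A,λ₂), λ₁)_a
      - b2 v (b2 v A lam₂) lam₁ x a = 0 := by
  intro a x
  simp only [b2]
  rw [contract v A lam₁ x, contract v A lam₂ x]
  ring
end
end

section
/- For all smooth vector fields A, B: ℝ³ → ℝ³ and every smooth gauge parameter λ: ℝ³ → ℝ, the quasi-isomorphism relation determining b̃₃ on (A, B, λ) holds: −(v·A)(v·B)∇λ + b̃₂( −(v·A)B − (v·B)A, λ ) = (v·A)(v·B)∇λ + (v·A)(v·∇λ)B + (v·B)(v·∇λ)A; equivalently b̃₃(A,B,λ) + b̃₂( F₂(A,B), λ ) = F₃(A, B, ∇λ). -/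
/- STATEMENT 4: quasi-isomorphism relation determining b̃₃ on (A, B, λ):
b̃₃(A,B,λ) + b̃₂(F₂(A,B),λ) = F₃(A,B,∇λ). -/

noncomputable section

/-- F₂(A,B) = −(v·A)B − (v·B)A. -/
def F2 (v : V3) (A B : V3 → V3) : V3 → V3 :=
  fun y b => -(∑ i, v i * A y i) * B y b - (∑ i, v i * B y i) * A y b

theorem deformed_CS_QISO_b3_on_two_fields_and_parameter
    (v : V3) (A B : V3 → V3) (lam : V3 → ℝ)
    (hA : ContDiff ℝ (⊤ : ℕ∞) A) (hB : ContDiff ℝ (⊤ : ℕ∞) B)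
    (hlam : ContDiff ℝ (⊤ : ℕ∞) lam) :
    ∀ (a : Fin 3) (x : V3),
      -- b̃₃(A,B,λ)_a
      (-(∑ i, v i * A x i) * (∑ i, v i * B x i) * pd lam a x)
      -- + b̃₂(F₂(A,B),λ)_a
      + b2 v (F2 v A B) lam x a
      -- = F₃(A,B,∇λ)_a
      = (∑ i, v i * A x i) * (∑ i, v i * B x i) * pd lam a x
        + (∑ i, v i * A x i) * (∑ i, v i * pd lam i x) * B x a
        + (∑ i, v i * B x i) * (∑ i, v i * pd lam i x) * A x a := by
  intro a x
  simp only [b2, F2, Fin.sum_univ_three]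
  ring
end
end

section
/- The first-order Seiberg–Witten map intertwines the closure of gauge transformations to first order in the noncommutativity parameter θ (equation (commuexp)): for all smooth matrix-valued functions λ₁, λ₂, A₁, …, A_d: ℝᵈ → Mat_N(ℂ) and every real antisymmetric d×d matrix θ, the following exact identity of the θ-linear terms holds: μ( −i[λ₁,λ₂], A ) = ½ Σ_{k,l} θ^{kl} ( ∂_kλ₁ ∂_lλ₂ − ∂_kλ₂ ∂_lλ₁ ) − i[ λ₁, μ(λ₂,A) ] + i[ λ₂, μ(λ₁,A) ] + μ( λ₂, δ_{λ₁}A ) − μ( λ₁, δ_{λ₂}A ), where [x,y] = xy − yx; the right-hand side consists of the first-order part of the star-commutator closure bracket −i(λ̂₁ ⋆ λ̂₂ − λ̂₂ ⋆ λ̂₁) of the mapped gauge parameters λ̂ᵢ = λᵢ + μ(λᵢ,A) together with the Seiberg–Witten corrections evaluated on gauge-transformed fields. -/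
/- STATEMENT 9: the first-order Seiberg–Witten map intertwines the closure of
gauge transformations to first order in θ (equation (commuexp)):
μ(−i[λ₁,λ₂], A) = ½ Σ θ^{kl}(∂_kλ₁∂_lλ₂ − ∂_kλ₂∂_lλ₁) − i[λ₁, μ(λ₂,A)]
  + i[λ₂, μ(λ₁,A)] + μ(λ₂, δ_{λ₁}A) − μ(λ₁, δ_{λ₂}A). -/

noncomputable section

/-- Smooth Mat_N(ℂ)-valued functions on ℝᵈ (entrywise). -/
abbrev MFun (d N : ℕ) := (Fin d → ℝ) → Fin N → Fin N → ℂ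

/-- Entrywise partial derivative ∂_k f. -/
def mpd {d N : ℕ} (f : MFun d N) (k : Fin d) : MFun d N :=
  fun x i j => fderiv ℝ (fun y => f y i j) x (Pi.single k 1)

/-- Pointwise matrix product. -/
def mmul {d N : ℕ} (f g : MFun d N) : MFun d N :=
  fun x i j => ∑ m, f x i m * g x m j

/-- Matrix commutator [f,g] = fg − gf. -/
def mcomm {d N : ℕ} (f g : MFun d N) : MFun d N :=
  fun x i j => mmul f g x i j - mmul g f x i j

/-- Matrix anticommutator {f,g} = fg + gf. -/
def manti {d N : ℕ} (f g : MFun d N) : MFun d N :=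
  fun x i j => mmul f g x i j + mmul g f x i j

/-- First-order Seiberg–Witten correction to the gauge parameter:
  μ(λ,A) = ¼ Σ_{k,l} θ^{kl} {∂_kλ, A_l}. -/
def mu {d N : ℕ} (θ : Fin d → Fin d → ℝ) (lam : MFun d N)
    (A : Fin d → MFun d N) : MFun d N :=
  fun x i j => (1 / 4 : ℂ) * ∑ k, ∑ l, (θ k l : ℂ) * manti (mpd lam k) (A l) x i j

/-- Ordinary Yang–Mills gauge transformation δ_λA_l = ∂_lλ + i[λ, A_l]. -/
def gvar {d N : ℕ} (lam : MFun d N) (A : Fin d → MFun d N) : Fin d → MFun d N :=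
  fun l x i j => mpd lam l x i j + Complex.I * mcomm lam (A l) x i j

/-! The Leibniz rule gives `∂ₖ(−i[λ₁,λ₂]) = −i([∂ₖλ₁,λ₂] + [λ₁,∂ₖλ₂])`, after which the claim is a
pointwise identity in the matrix algebra. There, commutators act on the `θ`-contracted
anticommutator `μ(P,B) = ¼ Σ θᵏˡ {Pₖ,Bₗ}` as derivations, `[a,{b,c}] = {[a,b],c} + {b,[a,c]}`,
which accounts for every term containing undifferentiated fields; the remaining terms
`μ(∂λ₂,∂λ₁) − μ(∂λ₁,∂λ₂)` cancel `½ Σ θᵏˡ (∂ₖλ₁∂ₗλ₂ − ∂ₖλ₂∂ₗλ₁)` by antisymmetry of `θ`. -/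

open Finset

theorem sum_sum_smul_swap_of_antisymm {ι S M : Type*} [Fintype ι] [Ring S] [AddCommGroup M]
    [Module S M] (θ : ι → ι → S) (hθ : ∀ k l, θ k l = -θ l k) (f : ι → ι → M) :
    ∑ k, ∑ l, θ k l • f l k = -∑ k, ∑ l, θ k l • f k l := by
  rw [sum_comm, ← sum_neg_distrib]
  refine sum_congr rfl fun l _ => ?_
  rw [← sum_neg_distrib]
  refine sum_congr rfl fun k _ => ?_
  rw [hθ, neg_smul]

section ThetaAnticomm

variable {ι R : Type*} [Fintype ι] [Ring R] [Algebra ℂ R] (θ : ι → ι → ℂ)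

def thetaAnticomm (P B : ι → R) : R :=
  (1 / 4 : ℂ) • ∑ k, ∑ l, θ k l • (P k * B l + B l * P k)

theorem thetaAnticomm_add_left (P P' B : ι → R) :
    thetaAnticomm θ (fun k => P k + P' k) B = thetaAnticomm θ P B + thetaAnticomm θ P' B := by
  simp only [thetaAnticomm, ← smul_add, ← sum_add_distrib]
  refine congrArg _ (sum_congr rfl fun k _ => sum_congr rfl fun l _ => ?_)
  noncomm_ring

theorem thetaAnticomm_add_right (P B B' : ι → R) :
    thetaAnticomm θ P (fun l => B l + B' l) = thetaAnticomm θ P B + thetaAnticomm θ P B' := by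
  simp only [thetaAnticomm, ← smul_add, ← sum_add_distrib]
  refine congrArg _ (sum_congr rfl fun k _ => sum_congr rfl fun l _ => ?_)
  noncomm_ring

theorem thetaAnticomm_smul_left (c : ℂ) (P B : ι → R) :
    thetaAnticomm θ (fun k => c • P k) B = c • thetaAnticomm θ P B := by
  simp only [thetaAnticomm, smul_sum, smul_mul_assoc, mul_smul_comm, ← smul_add]
  simp only [smul_comm c]

theorem thetaAnticomm_smul_right (c : ℂ) (P B : ι → R) :
    thetaAnticomm θ P (fun l => c • B l) = c • thetaAnticomm θ P B := by
  simp only [thetaAnticomm, smul_sum, smul_mul_assoc, mul_smul_comm, ← smul_add]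
  simp only [smul_comm c]

theorem thetaAnticomm_neg_left (P B : ι → R) :
    thetaAnticomm θ (fun k => -P k) B = -thetaAnticomm θ P B := by
  simpa using thetaAnticomm_smul_left θ (-1) P B

theorem lie_thetaAnticomm (a : R) (P B : ι → R) :
    ⁅a, thetaAnticomm θ P B⁆
      = thetaAnticomm θ (fun k => ⁅a, P k⁆) B + thetaAnticomm θ P (fun l => ⁅a, B l⁆) := by
  simp only [thetaAnticomm, Ring.lie_def, mul_smul_comm, smul_mul_assoc, mul_sum, sum_mul,
    ← smul_sub, ← smul_add, ← sum_sub_distrib, ← sum_add_distrib]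
  congr! 4 with k _ l _
  noncomm_ring

theorem thetaAnticomm_sub_swap (hθ : ∀ k l, θ k l = -θ l k) (P Q : ι → R) :
    thetaAnticomm θ P Q - thetaAnticomm θ Q P
      = (1 / 2 : ℂ) • ∑ k, ∑ l, θ k l • (P k * Q l - Q k * P l) := by
  have hQP := sum_sum_smul_swap_of_antisymm θ hθ fun k l => Q k * P l
  have hPQ := sum_sum_smul_swap_of_antisymm θ hθ fun k l => P k * Q l
  simp only [thetaAnticomm, smul_add, smul_sub, sum_add_distrib, sum_sub_distrib] at hQP hPQ ⊢
  rw [hQP, hPQ]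
  module

theorem thetaAnticomm_closure (hθ : ∀ k l, θ k l = -θ l k) (L₁ L₂ : R) (P Q B : ι → R) :
    thetaAnticomm θ (fun k => -Complex.I • (⁅P k, L₂⁆ + ⁅L₁, Q k⁆)) B
      = (1 / 2 : ℂ) • ∑ k, ∑ l, θ k l • (P k * Q l - Q k * P l)
        - Complex.I • ⁅L₁, thetaAnticomm θ Q B⁆ + Complex.I • ⁅L₂, thetaAnticomm θ P B⁆
        + thetaAnticomm θ Q (fun l => P l + Complex.I • ⁅L₁, B l⁆)
        - thetaAnticomm θ P (fun l => Q l + Complex.I • ⁅L₂, B l⁆) := by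
  have hskew : ∀ k, ⁅P k, L₂⁆ = -⁅L₂, P k⁆ := fun k => by
    simp only [Ring.lie_def, neg_sub]
  simp only [hskew, thetaAnticomm_smul_left, thetaAnticomm_add_left,
    thetaAnticomm_neg_left, thetaAnticomm_add_right, thetaAnticomm_smul_right,
    lie_thetaAnticomm, ← thetaAnticomm_sub_swap θ hθ]
  module

end ThetaAnticomm

section MatrixFunctions

variable {d N : ℕ}

theorem of_mmul (f g : MFun d N) (x : Fin d → ℝ) :
    Matrix.of (mmul f g x) = Matrix.of (f x) * Matrix.of (g x) := by
  ext a b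
  simp [mmul, Matrix.mul_apply]

theorem of_mcomm (f g : MFun d N) (x : Fin d → ℝ) :
    Matrix.of (mcomm f g x) = ⁅Matrix.of (f x), Matrix.of (g x)⁆ := by
  ext a b
  simp only [mcomm, Ring.lie_def, ← of_mmul, Matrix.sub_apply, Matrix.of_apply]

theorem of_mu (θ : Fin d → Fin d → ℝ) (lam : MFun d N) (A : Fin d → MFun d N)
    (x : Fin d → ℝ) :
    Matrix.of (mu θ lam A x) = thetaAnticomm (fun k l => (θ k l : ℂ))
      (fun k => Matrix.of (mpd lam k x)) (fun l => Matrix.of (A l x)) := by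
  ext a b
  simp only [mu, manti, thetaAnticomm, ← of_mmul, Matrix.of_apply, Matrix.smul_apply,
    Matrix.sum_apply, Matrix.add_apply, smul_eq_mul]

theorem of_gvar (lam : MFun d N) (A : Fin d → MFun d N) (l : Fin d) (x : Fin d → ℝ) :
    Matrix.of (gvar lam A l x)
      = Matrix.of (mpd lam l x) + Complex.I • ⁅Matrix.of (lam x), Matrix.of (A l x)⁆ := by
  ext a b
  simp only [gvar, ← of_mcomm, Matrix.of_apply, Matrix.add_apply, Matrix.smul_apply, smul_eq_mul]

theorem DifferentiableAt.mfun_entry {f : MFun d N} {x : Fin d → ℝ}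
    (hf : DifferentiableAt ℝ f x) (a b : Fin N) : DifferentiableAt ℝ (fun y => f y a b) x :=
  differentiableAt_pi.1 (differentiableAt_pi.1 hf a) b

theorem DifferentiableAt.mmul {f g : MFun d N} {x : Fin d → ℝ}
    (hf : DifferentiableAt ℝ f x) (hg : DifferentiableAt ℝ g x) :
    DifferentiableAt ℝ (mmul f g) x :=
  differentiableAt_pi.2 fun a => differentiableAt_pi.2 fun b =>
    DifferentiableAt.fun_sum fun m _ => (hf.mfun_entry a m).mul (hg.mfun_entry m b)

theorem of_mpd_mmul {f g : MFun d N} {x : Fin d → ℝ}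
    (hf : DifferentiableAt ℝ f x) (hg : DifferentiableAt ℝ g x) (k : Fin d) :
    Matrix.of (mpd (mmul f g) k x)
      = Matrix.of (mpd f k x) * Matrix.of (g x) + Matrix.of (f x) * Matrix.of (mpd g k x) := by
  ext a b
  simp only [mpd, mmul, Matrix.of_apply, Matrix.add_apply, Matrix.mul_apply,
    ← sum_add_distrib]
  have hprod (m : Fin N) : DifferentiableAt ℝ (fun y => f y a m * g y m b) x :=
    (hf.mfun_entry a m).mul (hg.mfun_entry m b)
  rw [fderiv_fun_sum fun m _ => hprod m, _root_.sum_apply]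
  refine sum_congr rfl fun m _ => ?_
  rw [fderiv_fun_mul (hf.mfun_entry a m) (hg.mfun_entry m b)]
  simp only [_root_.add_apply, _root_.smul_apply, smul_eq_mul]
  ring

theorem of_mpd_const_mul_sub {f g : MFun d N} {x : Fin d → ℝ}
    (hf : DifferentiableAt ℝ f x) (hg : DifferentiableAt ℝ g x) (c : ℂ) (k : Fin d) :
    Matrix.of (mpd (fun y a b => c * (f y a b - g y a b)) k x)
      = c • (Matrix.of (mpd f k x) - Matrix.of (mpd g k x)) := by
  ext a b
  simp only [mpd, Matrix.of_apply, Matrix.smul_apply, Matrix.sub_apply, smul_eq_mul]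
  have hsub : DifferentiableAt ℝ (fun y => f y a b - g y a b) x :=
    (hf.mfun_entry a b).sub (hg.mfun_entry a b)
  rw [fderiv_const_mul hsub c,
    fderiv_fun_sub (hf.mfun_entry a b) (hg.mfun_entry a b)]
  rfl

theorem of_mpd_const_mul_mcomm {f g : MFun d N} {x : Fin d → ℝ}
    (hf : DifferentiableAt ℝ f x) (hg : DifferentiableAt ℝ g x) (c : ℂ) (k : Fin d) :
    Matrix.of (mpd (fun y a b => c * mcomm f g y a b) k x)
      = c • (⁅Matrix.of (mpd f k x), Matrix.of (g x)⁆
          + ⁅Matrix.of (f x), Matrix.of (mpd g k x)⁆) := by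
  rw [show mcomm f g = fun y a b => mmul f g y a b - mmul g f y a b from rfl,
    of_mpd_const_mul_sub (hf.mmul hg) (hg.mmul hf), of_mpd_mmul hf hg, of_mpd_mmul hg hf]
  simp only [Ring.lie_def]
  congr 1
  abel

end MatrixFunctions

theorem SW_first_order_closure_general
    (d N : ℕ) (θ : Fin d → Fin d → ℝ) (hθ : ∀ k l, θ k l = -θ l k)
    (lam₁ lam₂ : MFun d N) (A : Fin d → MFun d N)
    (h1 : ContDiff ℝ (⊤ : ℕ∞) lam₁) (h2 : ContDiff ℝ (⊤ : ℕ∞) lam₂) :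
    ∀ (x : Fin d → ℝ) (i j : Fin N),
      -- μ(−i[λ₁,λ₂], A)
      mu θ (fun y a b => -Complex.I * mcomm lam₁ lam₂ y a b) A x i j
      = -- ½ Σ_{k,l} θ^{kl}(∂_kλ₁ ∂_lλ₂ − ∂_kλ₂ ∂_lλ₁)
        (1 / 2 : ℂ) * (∑ k, ∑ l, (θ k l : ℂ) *
          (mmul (mpd lam₁ k) (mpd lam₂ l) x i j
            - mmul (mpd lam₂ k) (mpd lam₁ l) x i j))
        -- −i[λ₁, μ(λ₂,A)] + i[λ₂, μ(λ₁,A)]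
        - Complex.I * mcomm lam₁ (mu θ lam₂ A) x i j
        + Complex.I * mcomm lam₂ (mu θ lam₁ A) x i j
        -- + μ(λ₂, δ_{λ₁}A) − μ(λ₁, δ_{λ₂}A)
        + mu θ lam₂ (gvar lam₁ A) x i j
        - mu θ lam₁ (gvar lam₂ A) x i j := by
  intro x i j
  have matrix_identity : Matrix.of (mu θ (fun y a b => -Complex.I * mcomm lam₁ lam₂ y a b) A x)
      = (1 / 2 : ℂ) • ∑ k, ∑ l, (θ k l : ℂ) •
          (Matrix.of (mmul (mpd lam₁ k) (mpd lam₂ l) x)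
            - Matrix.of (mmul (mpd lam₂ k) (mpd lam₁ l) x))
        - Complex.I • Matrix.of (mcomm lam₁ (mu θ lam₂ A) x)
        + Complex.I • Matrix.of (mcomm lam₂ (mu θ lam₁ A) x)
        + Matrix.of (mu θ lam₂ (gvar lam₁ A) x)
        - Matrix.of (mu θ lam₁ (gvar lam₂ A) x) := by
    simp only [of_mu, of_mcomm, of_mmul, of_gvar,
      of_mpd_const_mul_mcomm (h1.differentiable (by simp) x) (h2.differentiable (by simp) x)]
    exact thetaAnticomm_closure _ (fun k l => by simp [hθ k l]) _ _ _ _ _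
  simpa only [Matrix.sub_apply, Matrix.add_apply, Matrix.smul_apply, Matrix.sum_apply,
    Matrix.of_apply, smul_eq_mul] using congrFun (congrFun matrix_identity i) j

theorem SW_first_order_closure
    (d N : ℕ) (θ : Fin d → Fin d → ℝ) (hθ : ∀ k l, θ k l = -θ l k)
    (lam₁ lam₂ : MFun d N) (A : Fin d → MFun d N)
    (h1 : ContDiff ℝ (⊤ : ℕ∞) lam₁) (h2 : ContDiff ℝ (⊤ : ℕ∞) lam₂)
    (hA : ∀ l, ContDiff ℝ (⊤ : ℕ∞) (A l)) :
    ∀ (x : Fin d → ℝ) (i j : Fin N),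
      -- μ(−i[λ₁,λ₂], A)
      mu θ (fun y a b => -Complex.I * mcomm lam₁ lam₂ y a b) A x i j
      = -- ½ Σ_{k,l} θ^{kl}(∂_kλ₁ ∂_lλ₂ − ∂_kλ₂ ∂_lλ₁)
        (1 / 2 : ℂ) * (∑ k, ∑ l, (θ k l : ℂ) *
          (mmul (mpd lam₁ k) (mpd lam₂ l) x i j
            - mmul (mpd lam₂ k) (mpd lam₁ l) x i j))
        -- −i[λ₁, μ(λ₂,A)] + i[λ₂, μ(λ₁,A)]
        - Complex.I * mcomm lam₁ (mu θ lam₂ A) x i j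
        + Complex.I * mcomm lam₂ (mu θ lam₁ A) x i j
        -- + μ(λ₂, δ_{λ₁}A) − μ(λ₁, δ_{λ₂}A)
        + mu θ lam₂ (gvar lam₁ A) x i j
        - mu θ lam₁ (gvar lam₂ A) x i j :=
  SW_first_order_closure_general d N θ hθ lam₁ lam₂ A h1 h2
end
end
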